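/- Let q, r, κ ∈ ℝ with q ≠ 0, r ≠ 0 and 1 + 2q ≥ 0, let ε ∈ {−1, 1}, and set s = √(1 + 2q). Let D be the Type B connection on U = {(x¹,x²) ∈ ℝ² : x¹ > 0} whose only possibly nonzero Christoffel symbols are Γ¹_{11} = (q + εs)/x¹, Γ²_{12} = Γ²_{21} = q/x¹ and Γ¹_{22} = r/x¹. Then the function h(x¹,x²) = κ + 2(εs − 1) ln x¹ satisfies the affine gradient Ricci soliton equation Hes_h(∂_i,∂_j) + 2ρ^{sym}_{ij} = 0 on U for all i,j ∈ {1,2}; moreover, if additionally εs ≠ 1, the symmetrized Ricci tensor ρ^{sym} is non-degenerate (rank two) at every point of U. -/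

import Mathlib

/-!
For a Type B connection `Γ^k_{ij} = c^k_{ij} / x¹` with constant `c`, the Ricci tensor and the
Hessian of `κ + a ln x¹` are constant tensors divided by `(x¹)²`, so both claims reduce to algebra
in the constants. The only relation needed is `(εs)² = 1 + 2q`: it makes the `(1,1)` component of
the soliton equation vanish, and it factors `det ρ^{sym} · (x¹)⁴ = q r (1 + εs)(εs − 1) = 2 q² r`.
-/

noncomputable section

abbrev Pt2 := Fin 2 → ℝ

def pd2 (i : Fin 2) (f : Pt2 → ℝ) (p : Pt2) : ℝ :=
  fderiv ℝ f p (Pi.single i 1)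

def ricciD (Γ : Fin 2 → Fin 2 → Fin 2 → Pt2 → ℝ) (i j : Fin 2) (p : Pt2) : ℝ :=
  (∑ k : Fin 2, pd2 k (Γ k i j) p) - pd2 i (fun q => ∑ k : Fin 2, Γ k k j q) p
    + ∑ k : Fin 2, ∑ l : Fin 2, (Γ k k l p * Γ l i j p - Γ k i l p * Γ l k j p)

def ricciDSym (Γ : Fin 2 → Fin 2 → Fin 2 → Pt2 → ℝ) (i j : Fin 2) (p : Pt2) : ℝ :=
  (ricciD Γ i j p + ricciD Γ j i p) / 2

def hessD (Γ : Fin 2 → Fin 2 → Fin 2 → Pt2 → ℝ) (h : Pt2 → ℝ) (i j : Fin 2) (p : Pt2) : ℝ :=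
  pd2 i (pd2 j h) p - ∑ k : Fin 2, Γ k i j p * pd2 k h p

def covRicciD (Γ : Fin 2 → Fin 2 → Fin 2 → Pt2 → ℝ) (i j k : Fin 2) (p : Pt2) : ℝ :=
  pd2 i (fun q => ricciD Γ j k q) p - (∑ l : Fin 2, Γ l i j p * ricciD Γ l k p)
    - ∑ l : Fin 2, Γ l i k p * ricciD Γ j l p

/-- The Type B connection with `Γ¹_{11} = (q+εs)/x¹`, `Γ²_{12} = Γ²_{21} = q/x¹`,
`Γ¹_{22} = r/x¹` and all other Christoffel symbols zero. -/
def ΓB3 (q r e s : ℝ) : Fin 2 → Fin 2 → Fin 2 → Pt2 → ℝ := fun k i j x =>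
  if k = 0 ∧ i = 0 ∧ j = 0 then (q + e * s) / x 0
  else if k = 1 ∧ ((i = 0 ∧ j = 1) ∨ (i = 1 ∧ j = 0)) then q / x 0
  else if k = 0 ∧ i = 1 ∧ j = 1 then r / x 0
  else 0

open Real Topology

def typeB (c : Fin 2 → Fin 2 → Fin 2 → ℝ) : Fin 2 → Fin 2 → Fin 2 → Pt2 → ℝ :=
  fun k i j x => c k i j / x 0

lemma pd2_comp_coord_zero {g : ℝ → ℝ} {g' : ℝ} {p : Pt2} (hg : HasDerivAt g g' (p 0))
    (i : Fin 2) : pd2 i (fun x => g (x 0)) p = if i = 0 then g' else 0 := by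
  have hF : HasFDerivAt (fun x : Pt2 => g (x 0))
      (g' • (ContinuousLinearMap.proj (0 : Fin 2) : Pt2 →L[ℝ] ℝ)) p :=
    hg.comp_hasFDerivAt (f := fun x : Pt2 => x 0) p
      (ContinuousLinearMap.proj (R := ℝ) (φ := fun _ : Fin 2 => ℝ) 0).hasFDerivAt
  rw [pd2, hF.fderiv]
  fin_cases i <;> simp

lemma pd2_const_div_coord_zero (a : ℝ) (i : Fin 2) {p : Pt2} (hp : p 0 ≠ 0) :
    pd2 i (fun x => a / x 0) p = if i = 0 then -a / p 0 ^ 2 else 0 := by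
  have hg : HasDerivAt (fun t => a / t) (-a / p 0 ^ 2) (p 0) := by
    simpa [div_eq_mul_inv, neg_div] using (hasDerivAt_inv hp).const_mul a
  exact pd2_comp_coord_zero hg i

def typeBRicciCoeff (c : Fin 2 → Fin 2 → Fin 2 → ℝ) (i j : Fin 2) : ℝ :=
  -c 0 i j + (if i = 0 then ∑ k, c k k j else 0)
    + ∑ k, ∑ l, (c k k l * c l i j - c k i l * c l k j)

lemma ricciD_typeB (c : Fin 2 → Fin 2 → Fin 2 → ℝ) (i j : Fin 2) {p : Pt2} (hp : p 0 ≠ 0) :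
    ricciD (typeB c) i j p = typeBRicciCoeff c i j / p 0 ^ 2 := by
  have hdiv : ∀ k, pd2 k (typeB c k i j) p = if k = 0 then -c k i j / p 0 ^ 2 else 0 :=
    fun k => pd2_const_div_coord_zero (c k i j) k hp
  have htrace : (fun x : Pt2 => ∑ k, typeB c k k j x) = fun x => (∑ k, c k k j) / x 0 := by
    funext x; simp only [typeB, Finset.sum_div]
  have hquad : ∀ k l, typeB c k k l p * typeB c l i j p - typeB c k i l p * typeB c l k j p
      = (c k k l * c l i j - c k i l * c l k j) / p 0 ^ 2 := by
    intro k l; simp only [typeB]; field_simp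
  rw [ricciD, htrace, pd2_const_div_coord_zero _ _ hp]
  simp only [hdiv, hquad, ← Finset.sum_div, typeBRicciCoeff, Fin.sum_univ_two, one_ne_zero,
    ↓reduceIte]
  split_ifs <;> field_simp <;> ring

lemma pd2_log_coord_zero (κ a : ℝ) (i : Fin 2) {p : Pt2} (hp : 0 < p 0) :
    pd2 i (fun x => κ + a * log (x 0)) p = (if i = 0 then a else 0) / p 0 := by
  have hg : HasDerivAt (fun t => κ + a * log t) (a / p 0) (p 0) := by
    simpa [div_eq_mul_inv] using ((hasDerivAt_log hp.ne').const_mul a).const_add κ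
  rw [pd2_comp_coord_zero hg]
  split_ifs <;> simp

lemma hessD_typeB_log (c : Fin 2 → Fin 2 → Fin 2 → ℝ) (κ a : ℝ) (i j : Fin 2) {p : Pt2}
    (hp : 0 < p 0) :
    hessD (typeB c) (fun x => κ + a * log (x 0)) i j p
      = -a * ((if i = 0 ∧ j = 0 then 1 else 0) + c 0 i j) / p 0 ^ 2 := by
  have hgrad : pd2 j (fun x => κ + a * log (x 0)) =ᶠ[𝓝 p]
      fun x => (if j = 0 then a else 0) / x 0 :=
    (isOpen_lt continuous_const (continuous_apply 0)).eventually_mem hp |>.mono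
      fun x (hx : 0 < x 0) => pd2_log_coord_zero κ a j hx
  have hsecond : pd2 i (pd2 j fun x => κ + a * log (x 0)) p
      = pd2 i (fun x => (if j = 0 then a else 0) / x 0) p := by
    rw [pd2, pd2, hgrad.fderiv_eq]
  rw [hessD, hsecond, pd2_const_div_coord_zero _ _ hp.ne']
  simp only [Fin.sum_univ_two, typeB, pd2_log_coord_zero κ a _ hp, one_ne_zero, ↓reduceIte]
  split_ifs <;> simp_all <;> ring

def cB3 (q r e s : ℝ) : Fin 2 → Fin 2 → Fin 2 → ℝ := fun k i j =>
  if k = 0 ∧ i = 0 ∧ j = 0 then q + e * s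
  else if k = 1 ∧ ((i = 0 ∧ j = 1) ∨ (i = 1 ∧ j = 0)) then q
  else if k = 0 ∧ i = 1 ∧ j = 1 then r
  else 0

lemma ΓB3_eq_typeB (q r e s : ℝ) : ΓB3 q r e s = typeB (cB3 q r e s) := by
  funext k i j x
  simp only [ΓB3, typeB, cB3]
  split_ifs <;> simp

lemma ricciDSym_ΓB3 (q r e s : ℝ) (i j : Fin 2) {p : Pt2} (hp : p 0 ≠ 0) :
    ricciDSym (ΓB3 q r e s) i j p = !![q * (1 + e * s), 0; 0, r * (e * s - 1)] i j / p 0 ^ 2 := by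
  rw [ricciDSym, ΓB3_eq_typeB, ricciD_typeB _ _ _ hp, ricciD_typeB _ _ _ hp]
  fin_cases i <;> fin_cases j <;> simp [typeBRicciCoeff, cB3, Fin.sum_univ_two] <;> ring

def IsAffineGradientRicciSoliton (Γ : Fin 2 → Fin 2 → Fin 2 → Pt2 → ℝ) (h : Pt2 → ℝ)
    (U : Set Pt2) : Prop :=
  ∀ x ∈ U, ∀ i j, hessD Γ h i j x + 2 * ricciDSym Γ i j x = 0

lemma isAffineGradientRicciSoliton_ΓB3 (q r κ e s : ℝ) (hes : (e * s) ^ 2 = 1 + 2 * q) :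
    IsAffineGradientRicciSoliton (ΓB3 q r e s) (fun x => κ + 2 * (e * s - 1) * log (x 0))
      {x | 0 < x 0} := by
  intro x (hx : 0 < x 0) i j
  rw [ricciDSym_ΓB3 _ _ _ _ _ _ hx.ne', ΓB3_eq_typeB, hessD_typeB_log _ _ _ _ _ hx]
  fin_cases i <;> fin_cases j <;> simp [cB3]
  · field_simp
    linear_combination (-2) * hes
  · ring

lemma ricciDSym_ΓB3_det_ne_zero {q r e s : ℝ} (hq : q ≠ 0) (hr : r ≠ 0)
    (hes : (e * s) ^ 2 = 1 + 2 * q) {p : Pt2} (hp : p 0 ≠ 0) :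
    ricciDSym (ΓB3 q r e s) 0 0 p * ricciDSym (ΓB3 q r e s) 1 1 p
      - ricciDSym (ΓB3 q r e s) 0 1 p * ricciDSym (ΓB3 q r e s) 1 0 p ≠ 0 := by
  have hfactor : (1 + e * s) * (e * s - 1) ≠ 0 := by
    rw [show (1 + e * s) * (e * s - 1) = 2 * q by linear_combination hes]
    exact mul_ne_zero two_ne_zero hq
  simpa [ricciDSym_ΓB3 _ _ _ _ _ _ hp, hq, hr, hp] using hfactor

theorem stmt14 (q r κ e : ℝ) (hq : q ≠ 0) (hr : r ≠ 0) (hpos : 0 ≤ 1 + 2 * q)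
    (he : e = 1 ∨ e = -1) (s : ℝ) (hs : s = Real.sqrt (1 + 2 * q))
    (h : Pt2 → ℝ) (hdef : h = fun x : Pt2 => κ + 2 * (e * s - 1) * Real.log (x 0)) :
    (∀ x : Pt2, 0 < x 0 → ∀ i j : Fin 2,
        hessD (ΓB3 q r e s) h i j x + 2 * ricciDSym (ΓB3 q r e s) i j x = 0) ∧
    (e * s ≠ 1 → ∀ x : Pt2, 0 < x 0 →
        ricciDSym (ΓB3 q r e s) 0 0 x * ricciDSym (ΓB3 q r e s) 1 1 x
          - ricciDSym (ΓB3 q r e s) 0 1 x * ricciDSym (ΓB3 q r e s) 1 0 x ≠ 0) := by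
  have hes : (e * s) ^ 2 = 1 + 2 * q := by
    have he2 : e ^ 2 = 1 := by rcases he with rfl | rfl <;> norm_num
    rw [mul_pow, he2, one_mul, hs, Real.sq_sqrt hpos]
  subst hdef
  exact ⟨fun x hx => isAffineGradientRicciSoliton_ΓB3 q r κ e s hes x hx,
    fun _ x hx => ricciDSym_ΓB3_det_ne_zero hq hr hes hx.ne'⟩

end
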